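/- Let J = x*p2 - y*p1, H = p1^2 + p2^2, L1 = J^2, L2 = (p1 + i*p2)^2 over the complex numbers. Then R = {L1, L2} satisfies R^2 = -16 * L1 * L2^2. -/
import Mathlib


open Complex

/-- Canonical Poisson bracket on complex phase space (x, y, p1, p2). -/
noncomputable def poissonBracket (F G : ℂ → ℂ → ℂ → ℂ → ℂ) (x y p1 p2 : ℂ) : ℂ :=
    deriv (fun t => F x y t p2) p1 * deriv (fun t => G t y p1 p2) x
  + deriv (fun t => F x y p1 t) p2 * deriv (fun t => G x t p1 p2) y
  - deriv (fun t => G x y t p2) p1 * deriv (fun t => F t y p1 p2) x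
  - deriv (fun t => G x y p1 t) p2 * deriv (fun t => F x t p1 p2) y

noncomputable def Hf : ℂ → ℂ → ℂ → ℂ → ℂ := fun _ _ p1 p2 => p1^2 + p2^2
noncomputable def L1f : ℂ → ℂ → ℂ → ℂ → ℂ := fun x y p1 p2 => (x*p2 - y*p1)^2
noncomputable def L2f : ℂ → ℂ → ℂ → ℂ → ℂ := fun _ _ p1 p2 => (p1 + I*p2)^2


lemma dsq (a b c : ℂ) : deriv (fun t : ℂ => (a + b*t)^2) c = 2*(a + b*c)*b := by
  have h : HasDerivAt (fun t : ℂ => (a + b*t)^2) (2*(a + b*c)^1 * (0 + b*1)) c :=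
    ((hasDerivAt_const c a).add ((hasDerivAt_id c).const_mul b)).pow 2
  simpa using h.deriv.trans (by ring)

theorem E8_free_casimir (x y p1 p2 : ℂ) :
    (poissonBracket L1f L2f x y p1 p2)^2 =
      -16 * L1f x y p1 p2 * (L2f x y p1 p2)^2 := by
  have e1 : deriv (fun t => L1f x y t p2) p1 = 2*(x*p2 + (-y)*p1)*(-y) := by
    have : (fun t => L1f x y t p2) = fun t => (x*p2 + (-y)*t)^2 := by
      funext t; simp [L1f]; ring
    rw [this, dsq]
  have e2 : deriv (fun t => L1f x y p1 t) p2 = 2*(-(y*p1) + x*p2)*x := by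
    have : (fun t => L1f x y p1 t) = fun t => (-(y*p1) + x*t)^2 := by
      funext t; simp [L1f]; ring
    rw [this, dsq]
  have e3 : deriv (fun t => L1f t y p1 p2) x = 2*(-(y*p1) + p2*x)*p2 := by
    have : (fun t => L1f t y p1 p2) = fun t => (-(y*p1) + p2*t)^2 := by
      funext t; simp [L1f]; ring
    rw [this, dsq]
  have e4 : deriv (fun t => L1f x t p1 p2) y = 2*(x*p2 + (-p1)*y)*(-p1) := by
    have : (fun t => L1f x t p1 p2) = fun t => (x*p2 + (-p1)*t)^2 := by
      funext t; simp [L1f]; ring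
    rw [this, dsq]
  have f1 : deriv (fun t => L2f x y t p2) p1 = 2*(I*p2 + 1*p1)*1 := by
    have : (fun t => L2f x y t p2) = fun t => (I*p2 + 1*t)^2 := by
      funext t; simp [L2f]; ring
    rw [this, dsq]
  have f2 : deriv (fun t => L2f x y p1 t) p2 = 2*(p1 + I*p2)*I := by
    have : (fun t => L2f x y p1 t) = fun t => (p1 + I*t)^2 := rfl
    rw [this, dsq]
  have f3 : deriv (fun t => L2f t y p1 p2) x = 0 := by
    have : (fun t : ℂ => L2f t y p1 p2) = fun _ => (p1 + I*p2)^2 := rfl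
    rw [this, deriv_const]
  have f4 : deriv (fun t => L2f x t p1 p2) y = 0 := by
    have : (fun t : ℂ => L2f x t p1 p2) = fun _ => (p1 + I*p2)^2 := rfl
    rw [this, deriv_const]
  rw [poissonBracket, e1, e2, e3, e4, f1, f2, f3, f4]
  simp only [L1f, L2f]
  linear_combination (16*(x*p2-y*p1)^2*(p1+I*p2)^2*(p1^2+p2^2)) * I_sq
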